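/- arXiv:2205.09941 — 2 statements merged into one kernel-verified Lean document; each statement's English description precedes it below -/
import Mathlib

section
/- If a metric space X is proper (closed bounded sets are compact) and there is a rectifiable curve connecting two points x, y in X, then there exists a shortest curve connecting x and y, i.e., a curve from x to y whose length equals the infimum of lengths of all curves from x to y. -/
open Set Metric
open scoped ENNReal

/-- A curve from `x` to `y` parameterized on `[0,1]`. -/
def IsCurveOn {X : Type*} [PseudoEMetricSpace X] (γ : ℝ → X) (x y : X) : Prop :=
  ContinuousOn γ (Set.Icc 0 1) ∧ γ 0 = x ∧ γ 1 = y

/-- The set of lengths of curves from `x` to `y`. -/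
def curveLengths {X : Type*} [PseudoEMetricSpace X] (x y : X) : Set ℝ≥0∞ :=
  {ℓ | ∃ γ : ℝ → X, IsCurveOn γ x y ∧ eVariationOn γ (Set.Icc 0 1) = ℓ}

/-!
Every rectifiable curve can be reparametrized on `[0, 1]` proportionally to arc length, which makes
it Lipschitz with constant its length `L` without increasing the length. If `L₀` is the length of
some curve from `x` to `y`, the `L₀`-Lipschitz maps `ℝ → X` with `g 0 = x` and `g 1 = y` form a
compact set for pointwise convergence (Arzelà–Ascoli in its simplest form: Tychonoff plus
properness of `X`), on which length is lower semicontinuous. A minimizer of the length on this set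
is a shortest curve, since every curve of length at most `L₀` has a reparametrization in the set.
-/

open scoped NNReal

theorem LocallyBoundedVariationOn.continuousWithinAt_variationOnFromTo
    {α E : Type*} [LinearOrder α] [TopologicalSpace α] [OrderTopology α] [PseudoMetricSpace E]
    {f : α → E} {s : Set α} (hf : LocallyBoundedVariationOn f s) {a b : α} (ha : a ∈ s)
    (hb : b ∈ s) (hfb : ContinuousWithinAt f s b) :
    ContinuousWithinAt (variationOnFromTo f s a) s b := by
  -- the one-sided jumps of the variation are those of `f`, which vanish at `b`
  have left := variationOnFromTo.tendsto_left ha hb hf (hfb.mono inter_subset_left)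
  have right := variationOnFromTo.tendsto_right ha hb hf (hfb.mono inter_subset_left)
  rw [dist_self, sub_zero] at left
  rw [dist_self, add_zero] at right
  rw [← continuousWithinAt_sdiff_self, sdiff_eq, ← Iio_union_Ioi, inter_union_distrib_left]
  exact ContinuousWithinAt.union left right

theorem HasConstantSpeedOnWith.lipschitzOnWith {E : Type*} [PseudoEMetricSpace E] {f : ℝ → E}
    {s : Set ℝ} {l : ℝ≥0} (hf : HasConstantSpeedOnWith f s l) : LipschitzOnWith l f s := by
  intro x hx y hy
  wlog hxy : x ≤ y generalizing x y
  · rw [edist_comm, edist_comm x]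
    exact this hy hx (le_of_not_ge hxy)
  calc edist (f x) (f y) ≤ eVariationOn f (s ∩ Icc x y) :=
        eVariationOn.edist_le f ⟨hx, le_rfl, hxy⟩ ⟨hy, hxy, le_rfl⟩
    _ = l * edist x y := by
        rw [hf hx hy, ENNReal.ofReal_mul l.coe_nonneg, edist_comm, edist_dist,
          Real.dist_eq, abs_of_nonneg (sub_nonneg.2 hxy), ENNReal.ofReal_coe_nnreal]

theorem LipschitzOnWith.eVariationOn_Icc_le {E : Type*} [PseudoEMetricSpace E] {f : ℝ → E}
    {K : ℝ≥0} {a b : ℝ} (hf : LipschitzOnWith K f (Icc a b)) :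
    eVariationOn f (Icc a b) ≤ K * ENNReal.ofReal (b - a) := by
  simpa using hf.comp_eVariationOn_le (mapsTo_id (Icc a b))

theorem eVariationOn.lowerSemicontinuous_pi {α E : Type*} [LinearOrder α] [PseudoEMetricSpace E]
    (s : Set α) : LowerSemicontinuous fun f : α → E => eVariationOn f s := fun f _ hv =>
  eVariationOn.lowerSemicontinuous_aux (F := id) (fun x _ => (continuous_apply x).tendsto f) hv

theorem isCompact_setOf_lipschitzWith {α X : Type*} [PseudoMetricSpace α] [MetricSpace X]
    [ProperSpace X] (K : ℝ≥0) (a : α) (x : X) :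
    IsCompact {g : α → X | LipschitzWith K g ∧ g a = x} := by
  have hball : IsCompact {g : α → X | ∀ t, g t ∈ closedBall x (K * dist t a)} :=
    isCompact_pi_infinite fun t => isCompact_closedBall x _
  refine hball.of_isClosed_subset ((isClosed_setOfPred_lipschitzWith K).inter
    (isClosed_eq (continuous_apply a) continuous_const)) ?_
  rintro g ⟨hg, rfl⟩ t
  exact hg.dist_le_mul t a

theorem ContinuousOn.Icc_subset_image_variationOnFromTo {E : Type*} [PseudoMetricSpace E]
    {f : ℝ → E} {a b : ℝ} (hab : a ≤ b) (hf : ContinuousOn f (Icc a b))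
    (hBV : LocallyBoundedVariationOn f (Icc a b)) :
    Icc 0 (variationOnFromTo f (Icc a b) a b) ⊆ variationOnFromTo f (Icc a b) a '' Icc a b := by
  have ha : a ∈ Icc a b := left_mem_Icc.2 hab
  have hcont : ContinuousOn (variationOnFromTo f (Icc a b) a) (Icc a b) := fun t ht =>
    hBV.continuousWithinAt_variationOnFromTo ha ht (hf t ht)
  simpa only [variationOnFromTo.self] using intermediate_value_Icc hab hcont

theorem lipschitzWith_mul_projIcc (K : ℝ≥0) :
    LipschitzWith K fun t : ℝ => K * (projIcc 0 1 zero_le_one t : ℝ) := by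
  have := (lipschitzWith_smul (K : ℝ)).comp
    ((LipschitzWith.subtype_val _).comp (LipschitzWith.projIcc (zero_le_one' ℝ)))
  rw [NNReal.nnnorm_eq, mul_one, mul_one] at this
  exact this

theorem IsCurveOn.exists_lipschitzWith {X : Type*} [MetricSpace X] {γ : ℝ → X} {x y : X}
    (hγ : IsCurveOn γ x y) (hfin : eVariationOn γ (Icc 0 1) ≠ ⊤) :
    ∃ γ' : ℝ → X, IsCurveOn γ' x y ∧ LipschitzWith (eVariationOn γ (Icc 0 1)).toNNReal γ' ∧
      eVariationOn γ' (Icc 0 1) ≤ eVariationOn γ (Icc 0 1) := by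
  set K := (eVariationOn γ (Icc 0 1)).toNNReal
  have h0 : (0 : ℝ) ∈ Icc (0 : ℝ) 1 := left_mem_Icc.2 zero_le_one
  have h1 : (1 : ℝ) ∈ Icc (0 : ℝ) 1 := right_mem_Icc.2 zero_le_one
  have hBV : LocallyBoundedVariationOn γ (Icc 0 1) :=
    BoundedVariationOn.locallyBoundedVariationOn hfin
  set v := variationOnFromTo γ (Icc 0 1) 0
  set p := naturalParameterization γ (Icc 0 1) 0
  have hpv : ∀ t ∈ Icc (0 : ℝ) 1, p (v t) = γ t := fun t ht =>
    edist_eq_zero.1 (edist_naturalParameterization_eq_zero hBV h0 ht)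
  have hv0 : v 0 = 0 := variationOnFromTo.self γ _ 0
  have hv1 : v 1 = K := by
    rw [show v 1 = _ from variationOnFromTo.eq_of_le γ _ zero_le_one, inter_self]; rfl
  have hp : LipschitzOnWith 1 p (Icc 0 K) :=
    (has_unit_speed_naturalParameterization γ hBV h0).lipschitzOnWith.mono
      (hv1 ▸ hγ.1.Icc_subset_image_variationOnFromTo zero_le_one hBV)
  set c : ℝ → ℝ := fun t => K * projIcc 0 1 zero_le_one t
  have hc_maps : MapsTo c univ (Icc 0 K) := fun t _ =>
    ⟨mul_nonneg K.coe_nonneg (projIcc 0 1 _ t).2.1,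
      mul_le_of_le_one_right K.coe_nonneg (projIcc 0 1 _ t).2.2⟩
  have hlip : LipschitzWith K (p ∘ c) := by
    simpa using
      lipschitzOnWith_univ.1 (hp.comp (lipschitzWith_mul_projIcc K).lipschitzOnWith hc_maps)
  refine ⟨p ∘ c, ⟨hlip.continuous.continuousOn, ?_, ?_⟩, hlip, ?_⟩
  · have hc0 : c 0 = v 0 := by simp [c, hv0]
    rw [Function.comp_apply, hc0, hpv 0 h0, hγ.2.1]
  · have hc1 : c 1 = v 1 := by simp [c, hv1]
    rw [Function.comp_apply, hc1, hpv 1 h1, hγ.2.2]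
  · simpa [K, ENNReal.coe_toNNReal hfin] using
      hlip.lipschitzOnWith.eVariationOn_Icc_le (a := 0) (b := 1)

/-- In a proper metric space, if two points can be connected by a rectifiable curve,
then there is a shortest curve connecting them. -/
theorem exists_shortest_curve {X : Type*} [MetricSpace X] [ProperSpace X] (x y : X)
    (h : ∃ γ : ℝ → X, IsCurveOn γ x y ∧ eVariationOn γ (Set.Icc 0 1) ≠ ⊤) :
    ∃ γ : ℝ → X, IsCurveOn γ x y ∧
      eVariationOn γ (Set.Icc 0 1) = sInf (curveLengths x y) := by
  obtain ⟨γ₀, hγ₀, hfin₀⟩ := h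
  set L₀ := eVariationOn γ₀ (Icc 0 1)
  set S := {g : ℝ → X | LipschitzWith L₀.toNNReal g ∧ g 0 = x} ∩ {g | g 1 = y}
  have hS : IsCompact S := (isCompact_setOf_lipschitzWith _ 0 x).inter_right
    (isClosed_eq (continuous_apply 1) continuous_const)
  have hmem : ∀ γ, IsCurveOn γ x y → eVariationOn γ (Icc 0 1) ≤ L₀ →
      ∃ g ∈ S, eVariationOn g (Icc 0 1) ≤ eVariationOn γ (Icc 0 1) := by
    intro γ hγ hγL₀
    obtain ⟨g, hg, hlip, hlen⟩ := hγ.exists_lipschitzWith (ne_top_of_le_ne_top hfin₀ hγL₀)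
    exact ⟨g, ⟨⟨hlip.weaken (ENNReal.toNNReal_mono hfin₀ hγL₀), hg.2.1⟩, hg.2.2⟩, hlen⟩
  obtain ⟨g₀, hg₀S, -⟩ := hmem γ₀ hγ₀ le_rfl
  obtain ⟨g, ⟨⟨hg_lip, hg0⟩, hg1⟩, hg_min⟩ :=
    ((eVariationOn.lowerSemicontinuous_pi _).lowerSemicontinuousOn S).exists_isMinOn
      ⟨g₀, hg₀S⟩ hS
  have hg : IsCurveOn g x y := ⟨hg_lip.continuous.continuousOn, hg0, hg1⟩
  have hg_le : ∀ γ, IsCurveOn γ x y → eVariationOn γ (Icc 0 1) ≤ L₀ →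
      eVariationOn g (Icc 0 1) ≤ eVariationOn γ (Icc 0 1) := fun γ hγ hγL₀ =>
    let ⟨_, hg'S, hg'⟩ := hmem γ hγ hγL₀
    (hg_min hg'S).trans hg'
  refine ⟨g, hg, le_antisymm (le_sInf ?_) (sInf_le ⟨g, hg, rfl⟩)⟩
  rintro _ ⟨γ, hγ, rfl⟩
  rcases le_total (eVariationOn γ (Icc 0 1)) L₀ with hγL₀ | hL₀γ
  · exact hg_le γ hγ hγL₀
  · exact (hg_le γ₀ hγ₀ le_rfl).trans hL₀γ
end

section
/- Let X be a metric tree and T⊂X a closed non-empty subset that is itself a metric tree. Then there exists a 1-Lipschitz retraction r:X→T (i.e., r restricted to T is the identity and d(r(x),r(y))≤d(x,y) for all x,y) such that moreover d(x,r(x))=dist(x,T) for all x∈X. -/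
/-!
The retraction `r` sends `x` to its gate `p` in `T`: the first point of `T` on a geodesic from
`x` to some point of `T`. For `t ∈ T`, the geodesic from `x` to `p` followed by the geodesic of
`T` from `p` to `t` is an arc, because its first piece meets `T` only at `p`. By uniqueness of
arcs it is the geodesic from `x` to `t`, whence `d(x,t) = d(x,p) + d(p,t)`. This identity makes
`p` a nearest point of `T`, and adding it for `x` with `t = r y` and for `y` with `t = r x` gives
`2 d(r x, r y) ≤ 2 d(x, y)`.
-/

open Set Metric
open scoped ENNReal NNReal

/-- `X` is a length space if the distance between any two points equals the infimum
of lengths of curves connecting them. -/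
def IsLengthSpace (X : Type*) [PseudoEMetricSpace X] : Prop :=
  ∀ x y : X, edist x y = sInf (curveLengths x y)

/-- `X` is a geodesic space if any two points are joined by a curve whose length
equals the distance between them. -/
def IsGeodesicSpace (X : Type*) [PseudoEMetricSpace X] : Prop :=
  ∀ x y : X, ∃ γ : ℝ → X, IsCurveOn γ x y ∧ eVariationOn γ (Set.Icc 0 1) = edist x y

/-- `A` is an arc with endpoints `x` and `y`: a homeomorphic image of `[0,1]`,
parameterized by an injective continuous curve from `x` to `y`. -/
def IsArc {X : Type*} [PseudoEMetricSpace X] (A : Set X) (x y : X) : Prop :=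
  ∃ γ : ℝ → X, IsCurveOn γ x y ∧ Set.InjOn γ (Set.Icc 0 1) ∧ γ '' Set.Icc 0 1 = A

/-- `A` is a rectifiable arc with endpoints `x` and `y`. -/
def IsRectArc {X : Type*} [PseudoEMetricSpace X] (A : Set X) (x y : X) : Prop :=
  ∃ γ : ℝ → X, IsCurveOn γ x y ∧ Set.InjOn γ (Set.Icc 0 1) ∧ γ '' Set.Icc 0 1 = A ∧
    eVariationOn γ (Set.Icc 0 1) ≠ ⊤

/-- A metric tree: a geodesic space in which any two distinct points are joined by a
unique arc. -/
def IsMetricTree (X : Type*) [PseudoEMetricSpace X] : Prop :=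
  IsGeodesicSpace X ∧ ∀ x y : X, x ≠ y → ∃! A : Set X, IsArc A x y

section Curves

variable {X : Type*} [PseudoMetricSpace X] {γ : ℝ → X}

theorem dist_add_dist_add_dist_eq_of_eVariationOn_eq
    (hlen : eVariationOn γ (Icc 0 1) = edist (γ 0) (γ 1)) {s t : ℝ}
    (hs : 0 ≤ s) (hst : s ≤ t) (ht : t ≤ 1) :
    dist (γ 0) (γ s) + dist (γ s) (γ t) + dist (γ t) (γ 1) = dist (γ 0) (γ 1) := by
  have hsplit : eVariationOn γ (Icc 0 s) + eVariationOn γ (Icc s t) + eVariationOn γ (Icc t 1)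
      = eVariationOn γ (Icc 0 1) := by
    have h₁ := eVariationOn.Icc_add_Icc γ hs hst (mem_univ s)
    have h₂ := eVariationOn.Icc_add_Icc γ (hs.trans hst) ht (mem_univ t)
    simp only [univ_inter] at h₁ h₂
    rw [h₁, h₂]
  have hedist :
      edist (γ 0) (γ s) + edist (γ s) (γ t) + edist (γ t) (γ 1) = edist (γ 0) (γ 1) := by
    refine le_antisymm ?_ ((edist_triangle _ (γ t) _).trans
      (add_le_add_left (edist_triangle _ _ _) _))
    calc edist (γ 0) (γ s) + edist (γ s) (γ t) + edist (γ t) (γ 1)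
        ≤ eVariationOn γ (Icc 0 s) + eVariationOn γ (Icc s t) + eVariationOn γ (Icc t 1) := by
          gcongr <;>
            exact eVariationOn.edist_le γ (left_mem_Icc.2 ‹_›) (right_mem_Icc.2 ‹_›)
      _ = edist (γ 0) (γ 1) := by rw [hsplit, hlen]
  simp only [edist_dist] at hedist
  rwa [← ENNReal.ofReal_add (by positivity) (by positivity),
    ← ENNReal.ofReal_add (by positivity) (by positivity),
    ENNReal.ofReal_eq_ofReal_iff (by positivity) (by positivity)] at hedist

theorem dist_eq_abs_sub_of_eVariationOn_eq
    (hlen : eVariationOn γ (Icc 0 1) = edist (γ 0) (γ 1)) {s t : ℝ}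
    (hs : s ∈ Icc (0 : ℝ) 1) (ht : t ∈ Icc (0 : ℝ) 1) :
    dist (γ s) (γ t) = |dist (γ 0) (γ s) - dist (γ 0) (γ t)| := by
  have of_le {s t : ℝ} (hs : s ∈ Icc (0 : ℝ) 1) (ht : t ∈ Icc (0 : ℝ) 1) (hst : s ≤ t) :
      dist (γ s) (γ t) = |dist (γ 0) (γ s) - dist (γ 0) (γ t)| := by
    have h₁ := dist_add_dist_add_dist_eq_of_eVariationOn_eq hlen hs.1 hst ht.2
    have h₂ := dist_add_dist_add_dist_eq_of_eVariationOn_eq hlen ht.1 ht.2 le_rfl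
    rw [dist_self, add_zero] at h₂
    rw [abs_of_nonpos (by linarith [dist_nonneg (x := γ s) (y := γ t)])]
    linarith
  rcases le_total s t with hst | hts
  · exact of_le hs ht hst
  · rw [dist_comm, abs_sub_comm]
    exact of_le ht hs hts

end Curves

section Arcs

variable {X : Type*} [PseudoEMetricSpace X]

theorem IsArc.ne {A : Set X} {x y : X} (hA : IsArc A x y) : x ≠ y := by
  obtain ⟨γ, ⟨-, rfl, rfl⟩, hinj, -⟩ := hA
  exact fun h => zero_ne_one (hinj (left_mem_Icc.2 zero_le_one) (right_mem_Icc.2 zero_le_one) h)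

theorem isArc_image_Icc {c : ℝ → X} {L : ℝ} (hL : 0 < L) (hc : ContinuousOn c (Icc 0 L))
    (hinj : InjOn c (Icc 0 L)) : IsArc (c '' Icc 0 L) (c 0) (c L) := by
  have himg : (· * L) '' Icc (0 : ℝ) 1 = Icc 0 L := by
    rw [image_mul_right_Icc zero_le_one hL.le, zero_mul, one_mul]
  have hmaps : MapsTo (· * L) (Icc (0 : ℝ) 1) (Icc 0 L) := himg ▸ mapsTo_image _ _
  refine ⟨fun t => c (t * L), ⟨?_, by simp, by simp⟩, ?_, ?_⟩
  · exact hc.comp (continuous_mul_const L).continuousOn hmaps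
  · exact hinj.comp (mul_left_injective₀ hL.ne').injOn hmaps
  · rw [← himg, image_image]

theorem isArc_image_union_image {ι κ : ℝ → X} {a b : ℝ} (ha : 0 ≤ a) (hb : 0 < b)
    (hι : Continuous ι) (hκ : Continuous κ) (hιinj : InjOn ι (Icc 0 a))
    (hκinj : InjOn κ (Icc 0 b)) (hjoin : ι a = κ 0)
    (hmeet : ∀ s ∈ Icc 0 a, ∀ u ∈ Icc 0 b, ι s = κ u → s = a) :
    IsArc (ι '' Icc 0 a ∪ κ '' Icc 0 b) (ι 0) (κ b) := by
  classical
  set c : ℝ → X := fun u => if u ≤ a then ι u else κ (u - a)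
  have hc_left {u : ℝ} (hu : u ≤ a) : c u = ι u := if_pos hu
  have hc_right {u : ℝ} (hu : a < u) : c u = κ (u - a) := if_neg hu.not_ge
  have hc : Continuous c :=
    Continuous.if_le hι (hκ.comp (continuous_id.sub continuous_const)) continuous_id
      continuous_const fun u hu => by rw [hu, sub_self, hjoin]
  have hmixed {u v : ℝ} (hu : u ∈ Icc 0 a) (hav : a < v) (hv : v ≤ a + b) :
      ι u ≠ κ (v - a) := by
    intro huv
    have hv' : v - a ∈ Icc 0 b := ⟨by linarith, by linarith⟩
    rw [hmeet u hu _ hv' huv, hjoin] at huv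
    linarith [hκinj (left_mem_Icc.2 hb.le) hv' huv]
  have hinj : InjOn c (Icc 0 (a + b)) := by
    intro u hu v hv huv
    rcases le_or_gt u a with hua | hau <;> rcases le_or_gt v a with hva | hav
    · rw [hc_left hua, hc_left hva] at huv
      exact hιinj ⟨hu.1, hua⟩ ⟨hv.1, hva⟩ huv
    · rw [hc_left hua, hc_right hav] at huv
      exact absurd huv (hmixed ⟨hu.1, hua⟩ hav hv.2)
    · rw [hc_right hau, hc_left hva] at huv
      exact absurd huv.symm (hmixed ⟨hv.1, hva⟩ hau hu.2)
    · rw [hc_right hau, hc_right hav] at huv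
      have hu' : u - a ∈ Icc 0 b := ⟨by linarith, by linarith [hu.2]⟩
      have hv' : v - a ∈ Icc 0 b := ⟨by linarith, by linarith [hv.2]⟩
      linarith [hκinj hu' hv' huv]
  have himage : c '' Icc 0 (a + b) = ι '' Icc 0 a ∪ κ '' Icc 0 b := by
    ext z
    constructor
    · rintro ⟨u, hu, rfl⟩
      rcases le_or_gt u a with hua | hau
      · exact Or.inl ⟨u, ⟨hu.1, hua⟩, (hc_left hua).symm⟩
      · exact Or.inr ⟨u - a, ⟨by linarith, by linarith [hu.2]⟩, (hc_right hau).symm⟩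
    · rintro (⟨s, hs, rfl⟩ | ⟨u, hu, rfl⟩)
      · exact ⟨s, ⟨hs.1, by linarith [hs.2]⟩, hc_left hs.2⟩
      · refine ⟨a + u, ⟨by linarith [hu.1], by linarith [hu.2]⟩, ?_⟩
        rcases hu.1.eq_or_lt with rfl | hu₀
        · rw [add_zero, hc_left le_rfl, hjoin]
        · rw [hc_right (by linarith), add_sub_cancel_left]
  have hcb : c (a + b) = κ b := by rw [hc_right (by linarith), add_sub_cancel_left]
  simpa only [himage, hc_left ha, hcb] using
    isArc_image_Icc (by linarith) hc.continuousOn hinj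

end Arcs

section Geodesics

variable {X : Type*} [MetricSpace X]

/-- Only the values on `[0, dist x y]` matter; continuity on all of `ℝ` makes concatenations
continuous without case analysis at the ends. -/
structure IsGeodesicSegment (ι : ℝ → X) (x y : X) : Prop where
  continuous : Continuous ι
  apply_zero : ι 0 = x
  apply_dist : ι (dist x y) = y
  dist_eq : ∀ a ∈ Icc 0 (dist x y), ∀ b ∈ Icc 0 (dist x y), dist (ι a) (ι b) = |a - b|

theorem exists_isGeodesicSegment_of_eVariationOn_eq {γ : ℝ → X}
    (hγ : ContinuousOn γ (Icc 0 1)) (hlen : eVariationOn γ (Icc 0 1) = edist (γ 0) (γ 1)) :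
    ∃ ι, IsGeodesicSegment ι (γ 0) (γ 1) ∧ ∀ a, ι a ∈ γ '' Icc 0 1 := by
  set D := dist (γ 0) (γ 1)
  have hD : 0 ≤ D := dist_nonneg
  have hsurj : Icc 0 D ⊆ (fun s => dist (γ 0) (γ s)) '' Icc 0 1 := by
    simpa using intermediate_value_Icc zero_le_one (f := fun s => dist (γ 0) (γ s))
      ((continuous_const.dist continuous_id).comp_continuousOn hγ)
  choose g hg₁ hg₂ using fun c : Icc 0 D => hsurj c.2
  beta_reduce at hg₂
  have hiso : Isometry fun c => γ (g c) := by
    refine Isometry.of_dist_eq fun c c' => ?_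
    rw [dist_eq_abs_sub_of_eVariationOn_eq hlen (hg₁ c) (hg₁ c'), hg₂, hg₂, Subtype.dist_eq,
      Real.dist_eq]
  have hdist_one (c : Icc 0 D) : dist (γ (g c)) (γ 1) = D - c := by
    rw [dist_eq_abs_sub_of_eVariationOn_eq hlen (hg₁ c) (right_mem_Icc.2 zero_le_one), hg₂,
      abs_of_nonpos (sub_nonpos.2 c.2.2), neg_sub]
  refine ⟨fun a => γ (g (projIcc 0 D hD a)), ⟨?_, ?_, ?_, ?_⟩,
    fun a => ⟨_, hg₁ _, rfl⟩⟩
  · exact (hiso.lipschitz.comp (LipschitzWith.projIcc hD)).continuous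
  · rw [← dist_eq_zero, dist_comm, hg₂, projIcc_left]
  · rw [← dist_eq_zero, hdist_one, projIcc_right, sub_self]
  · intro a ha b hb
    rw [hiso.dist_eq, projIcc_of_mem hD ha, projIcc_of_mem hD hb, Subtype.dist_eq, Real.dist_eq]

theorem IsGeodesicSpace.exists_isGeodesicSegment (h : IsGeodesicSpace X) (x y : X) :
    ∃ ι, IsGeodesicSegment ι x y := by
  obtain ⟨γ, ⟨hγ, rfl, rfl⟩, hlen⟩ := h x y
  exact (exists_isGeodesicSegment_of_eVariationOn_eq hγ hlen).imp fun _ => And.left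

theorem IsGeodesicSpace.exists_isGeodesicSegment_subset {T : Set X} (h : IsGeodesicSpace T)
    {x y : X} (hx : x ∈ T) (hy : y ∈ T) :
    ∃ ι, IsGeodesicSegment ι x y ∧ ∀ a, ι a ∈ T := by
  obtain ⟨γ, ⟨hγ, hγ₀, hγ₁⟩, hlen⟩ := h ⟨x, hx⟩ ⟨y, hy⟩
  obtain ⟨ι, hι, hιγ⟩ := exists_isGeodesicSegment_of_eVariationOn_eq
    (continuous_subtype_val.comp_continuousOn hγ)
    (by simp only [Function.comp_apply, hγ₀, hγ₁]; exact hlen)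
  rw [Function.comp_apply, hγ₀, Function.comp_apply, hγ₁] at hι
  refine ⟨ι, hι, fun a => ?_⟩
  obtain ⟨s, -, hs⟩ := hιγ a
  exact hs ▸ (γ s).2

namespace IsGeodesicSegment

variable {ι : ℝ → X} {x y : X} {a : ℝ}

theorem dist_left (hι : IsGeodesicSegment ι x y) (ha : a ∈ Icc 0 (dist x y)) :
    dist x (ι a) = a := by
  rw [← hι.apply_zero, hι.dist_eq 0 (left_mem_Icc.2 dist_nonneg) a ha, zero_sub, abs_neg,
    abs_of_nonneg ha.1]

theorem dist_add_dist (hι : IsGeodesicSegment ι x y) (ha : a ∈ Icc 0 (dist x y)) :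
    dist x (ι a) + dist (ι a) y = dist x y := by
  conv_lhs => rw [← hι.apply_dist]
  rw [hι.dist_left ha, hι.dist_eq a ha _ (right_mem_Icc.2 dist_nonneg),
    abs_of_nonpos (sub_nonpos.2 ha.2)]
  ring

theorem injOn (hι : IsGeodesicSegment ι x y) : InjOn ι (Icc 0 (dist x y)) := by
  intro a ha b hb hab
  have := hι.dist_eq a ha b hb
  rwa [hab, dist_self, eq_comm, abs_eq_zero, sub_eq_zero] at this

theorem isArc (hι : IsGeodesicSegment ι x y) (hxy : x ≠ y) :
    IsArc (ι '' Icc 0 (dist x y)) x y := by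
  simpa only [hι.apply_zero, hι.apply_dist] using
    isArc_image_Icc (dist_pos.2 hxy) hι.continuous.continuousOn hι.injOn

end IsGeodesicSegment

end Geodesics

section Gates

variable {X : Type*} [MetricSpace X]

theorem IsMetricTree.dist_add_dist_of_mem_arc (hX : IsMetricTree X) {A : Set X} {x y m : X}
    (hA : IsArc A x y) (hm : m ∈ A) : dist x m + dist m y = dist x y := by
  obtain ⟨ι, hι⟩ := hX.1.exists_isGeodesicSegment x y
  obtain ⟨a, ha, rfl⟩ : m ∈ ι '' Icc 0 (dist x y) := by
    rwa [(hX.2 x y hA.ne).unique (hι.isArc hA.ne) hA]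
  exact hι.dist_add_dist ha

def IsGate (T : Set X) (x p : X) : Prop :=
  p ∈ T ∧ ∀ t ∈ T, dist x p + dist p t = dist x t

namespace IsGate

variable {T : Set X} {x y p q : X}

theorem eq_of_mem (h : IsGate T x p) (hx : x ∈ T) : p = x := by
  have hxp := h.2 x hx
  rw [dist_self, dist_comm p x] at hxp
  exact (dist_eq_zero.1 (by linarith [dist_nonneg (x := x) (y := p)])).symm

theorem dist_eq_infDist (h : IsGate T x p) : dist x p = infDist x T :=
  le_antisymm
    ((le_infDist ⟨p, h.1⟩).2 fun t ht => by linarith [h.2 t ht, dist_nonneg (x := p) (y := t)])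
    (infDist_le_dist_of_mem h.1)

theorem dist_le (hp : IsGate T x p) (hq : IsGate T y q) : dist p q ≤ dist x y := by
  have hx := hp.2 q hq.1
  have hy := hq.2 p hp.1
  linarith [dist_triangle x y q, dist_triangle y x p, dist_comm x y, dist_comm p q]

end IsGate

theorem IsMetricTree.exists_isGate (hX : IsMetricTree X) {T : Set X} (hTc : IsClosed T)
    (hTne : T.Nonempty) (hTg : IsGeodesicSpace T) (x : X) : ∃ p, IsGate T x p := by
  obtain ⟨t₀, ht₀⟩ := hTne
  obtain ⟨ι, hι⟩ := hX.1.exists_isGeodesicSegment x t₀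
  obtain ⟨a, ⟨haD, haT⟩, hamin⟩ :=
    (isCompact_Icc.inter_right (hTc.preimage hι.continuous)).exists_isLeast
      ⟨dist x t₀, right_mem_Icc.2 dist_nonneg, by rwa [mem_preimage, hι.apply_dist]⟩
  refine ⟨ι a, haT, fun t ht => ?_⟩
  rcases eq_or_ne (ι a) t with rfl | hpt
  · rw [dist_self, add_zero]
  obtain ⟨κ, hκ, hκT⟩ := hTg.exists_isGeodesicSegment_subset haT ht
  have harc := isArc_image_union_image haD.1 (dist_pos.2 hpt) hι.continuous hκ.continuous
    (hι.injOn.mono (Icc_subset_Icc_right haD.2)) hκ.injOn hκ.apply_zero.symm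
    fun s hs u _ hsu =>
      le_antisymm hs.2 (hamin ⟨⟨hs.1, hs.2.trans haD.2⟩, mem_preimage.2 (hsu ▸ hκT u)⟩)
  rw [hι.apply_zero, hκ.apply_dist] at harc
  exact hX.dist_add_dist_of_mem_arc harc (Or.inl ⟨a, ⟨haD.1, le_rfl⟩, rfl⟩)

end Gates

/-- If `X` is a metric tree and `T ⊆ X` is a closed non-empty subset that is itself a
metric tree, then there is a 1-Lipschitz retraction `r : X → T` with
`d(x, r(x)) = dist(x, T)` for all `x`. -/
theorem exists_lipschitz_retraction_onto_subtree {X : Type*} [MetricSpace X]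
    (hX : IsMetricTree X) (T : Set X) (hTc : IsClosed T) (hTne : T.Nonempty)
    (hTt : IsMetricTree ↥T) :
    ∃ r : X → X, (∀ x, r x ∈ T) ∧ (∀ t ∈ T, r t = t) ∧ LipschitzWith 1 r ∧
      ∀ x, dist x (r x) = Metric.infDist x T := by
  choose r hr using hX.exists_isGate hTc hTne hTt.1
  exact ⟨r, fun x => (hr x).1, fun t ht => (hr t).eq_of_mem ht,
    LipschitzWith.mk_one fun x y => (hr x).dist_le (hr y), fun x => (hr x).dist_eq_infDist⟩
end
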